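/- arXiv:2010.07433 — 5 statements merged into one kernel-verified Lean document; each statement's English description precedes it below -/
import Mathlib

section
/- For every natural number n, the automorphism group of the free group on n generators is generated by the elementary Nielsen automorphisms. Precisely: let F = FreeGroup (Fin n) with generators a_1, …, a_n. Then the subgroup of MulAut F generated by the following three families of automorphisms is all of MulAut F: (a) for each i, the automorphism sending a_i to a_i⁻¹ and fixing all other generators; (b) for each pair i ≠ j, the automorphism interchanging a_i and a_j and fixing all other generators; (c) for each pair i ≠ j, the automorphism sending a_i to a_i * a_j and fixing all other generators. -/
/-!
Nielsen's argument. Given `φ`, choose `ψ` in the coset `φ N` (`N` the Nielsen subgroup) that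
minimises first the total length of the images `ψ (of i)` and then a tie-breaking weight. Since no
elementary move decreases this complexity, the images `ψ (a^{±1})` of the letters satisfy
Nielsen's conditions (N0)–(N2). For such a family, every factor of a reduced product keeps a
nonempty middle part, so a reduced word of length `m` is mapped to an element of length at
least `m`. Hence `ψ⁻¹` maps each generator to a letter, i.e. `ψ⁻¹` is a signed permutation of
the generators, and those are products of inversions and swaps.
-/

namespace FreeGroup

section Letters

variable {α : Type*}

theorem mk_singleton (a : α) (b : Bool) : mk [(a, b)] = bif b then of a else (of a)⁻¹ := by
  cases b <;> rfl

theorem inv_mk_singleton (c : α × Bool) : (mk [c])⁻¹ = mk [(c.1, !c.2)] := by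
  rw [inv_mk]; rfl

theorem mk_singleton_ne_one (c : α × Bool) : mk [c] ≠ 1 := by
  cases c with | mk a b => cases b <;> simp [mk_singleton]

theorem of_ne_inv_of (a b : α) : of a ≠ (of b)⁻¹ := by
  classical
  intro h
  simpa [invRev] using congrArg toWord h

theorem map_mk_singleton {F G : Type*} [Group G] [FunLike F (FreeGroup α) G]
    [MonoidHomClass F (FreeGroup α) G] (f : F) (a : α) (b : Bool) :
    f (mk [(a, b)]) = bif b then f (of a) else (f (of a))⁻¹ := by
  cases b <;> simp [mk_singleton]

theorem map_mk_eq_prod {G : Type*} [Group G] (f : FreeGroup α →* G) (L : List (α × Bool)) :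
    f (mk L) = (L.map fun c => f (mk [c])).prod := by
  induction L with
  | nil => simp [← one_eq_mk]
  | cons c L ih => rw [← List.singleton_append, ← mul_mk, _root_.map_mul, ih]; rfl

@[ext]
theorem mulEquiv_ext {G : Type*} [Group G] {f g : FreeGroup α ≃* G}
    (h : ∀ a, f (of a) = g (of a)) : f = g :=
  MulEquiv.toMonoidHom_injective (ext_hom _ _ h)

end Letters

section Cancellation

variable {α : Type*}

theorem IsReduced.exists_eq_append_invRev {L₁ L₂ : List (α × Bool)} (h₁ : IsReduced L₁)
    (h₂ : IsReduced L₂) :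
    ∃ A B C, L₁ = A ++ C ∧ L₂ = invRev C ++ B ∧ IsReduced (A ++ B) := by
  induction L₁ using List.reverseRecOn generalizing L₂ with
  | nil => exact ⟨[], L₂, [], rfl, rfl, h₂⟩
  | append_singleton M c ih =>
    have hM : IsReduced M := h₁.infix (List.prefix_append M [c]).isInfix
    cases L₂ with
    | nil => exact ⟨M ++ [c], [], [], by simp, rfl, by simpa using h₁⟩
    | cons d L₂ =>
      by_cases hcd : d = (c.1, !c.2)
      · obtain ⟨A, B, C, rfl, rfl, hAB⟩ := ih hM (h₂.infix (List.suffix_cons d L₂).isInfix)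
        exact ⟨A, B, C ++ [c], by simp, by simp [invRev, hcd], hAB⟩
      · refine ⟨M ++ [c], d :: L₂, [], by simp, rfl, ?_⟩
        have hcd' : IsReduced ([c] ++ d :: L₂) := by
          refine isReduced_cons_cons.2 ⟨fun h => ?_, h₂⟩
          by_contra hb
          exact hcd (Prod.ext h.symm (Bool.eq_not_iff.2 (Ne.symm hb)))
        simpa using h₁.append_overlap hcd' (List.cons_ne_nil c [])

variable [DecidableEq α]

theorem norm_mk_of_isReduced {L : List (α × Bool)} (h : IsReduced L) :
    norm (mk L) = L.length := by
  rw [norm, toWord_mk, h.reduce_eq]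

theorem exists_eq_mk_singleton_of_norm_eq_one {x : FreeGroup α} (h : norm x = 1) :
    ∃ c, x = mk [c] := by
  obtain ⟨c, hc⟩ := List.length_eq_one_iff.1 h
  exact ⟨c, by rw [← hc, mk_toWord]⟩

theorem exists_maximal_cancellation (x y : FreeGroup α) :
    ∃ p r q : FreeGroup α, x = p * r ∧ y = r⁻¹ * q ∧ norm x = norm p + norm r ∧
      norm y = norm r + norm q ∧ norm (x * y) = norm p + norm q := by
  obtain ⟨A, B, C, hx, hy, hAB⟩ :=
    isReduced_toWord.exists_eq_append_invRev (isReduced_toWord (x := y))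
  have hA : IsReduced A := hAB.infix (List.prefix_append A B).isInfix
  have hB : IsReduced B := hAB.infix (List.suffix_append A B).isInfix
  have hC : IsReduced C :=
    (isReduced_toWord (x := x)).infix (hx ▸ (List.suffix_append A C).isInfix)
  have hx' : x = mk A * mk C := by rw [mul_mk, ← hx, mk_toWord]
  have hy' : y = (mk C)⁻¹ * mk B := by rw [inv_mk, mul_mk, ← hy, mk_toWord]
  refine ⟨mk A, mk C, mk B, hx', hy', ?_, ?_, ?_⟩
  · rw [norm, hx, List.length_append, norm_mk_of_isReduced hA, norm_mk_of_isReduced hC]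
  · rw [norm, hy, List.length_append, invRev_length, norm_mk_of_isReduced hB,
      norm_mk_of_isReduced hC]
  · rw [hx', hy', mul_assoc, mul_inv_cancel_left, mul_mk, norm_mk_of_isReduced hAB,
      List.length_append, norm_mk_of_isReduced hA, norm_mk_of_isReduced hB]

theorem toWord_mul_of_norm_mul {a b : FreeGroup α} (h : norm (a * b) = norm a + norm b) :
    (a * b).toWord = a.toWord ++ b.toWord :=
  (toWord_mul_sublist a b).eq_of_length (by simpa [norm] using h)

theorem exists_eq_mul_of_mul_eq_mul {a b c d : FreeGroup α} (h : a * b = c * d)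
    (hab : norm (a * b) = norm a + norm b) (hcd : norm (c * d) = norm c + norm d)
    (hdb : norm d ≤ norm b) :
    ∃ e, b = e * d ∧ c = a * e ∧ norm b = norm e + norm d ∧ norm c = norm a + norm e := by
  have hw : a.toWord ++ b.toWord = c.toWord ++ d.toWord := by
    rw [← toWord_mul_of_norm_mul hab, ← toWord_mul_of_norm_mul hcd, h]
  rcases List.append_eq_append_iff.1 hw with ⟨E, hc, hb⟩ | ⟨E, ha, hd⟩
  · have hE : IsReduced E :=
      (isReduced_toWord (x := c)).infix (hc ▸ (List.suffix_append _ E).isInfix)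
    refine ⟨mk E, ?_, ?_, ?_, ?_⟩
    · rw [← mk_toWord (x := b), hb, ← mul_mk, mk_toWord]
    · rw [← mk_toWord (x := c), hc, ← mul_mk, mk_toWord]
    · rw [norm, hb, List.length_append, norm_mk_of_isReduced hE, norm]
    · rw [norm, hc, List.length_append, norm_mk_of_isReduced hE, norm]
  · obtain rfl : E = [] := by
      have := congrArg List.length hd
      simp only [List.length_append, norm] at this hdb
      exact List.length_eq_zero_iff.1 (by omega)
    simp only [List.append_nil, List.nil_append] at ha hd
    refine ⟨1, ?_, ?_, ?_, ?_⟩ <;> simp [toWord_injective ha, toWord_injective hd]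

theorem eq_of_mul_eq_mul_of_norm_eq {a b c d : FreeGroup α} (h : a * b = c * d)
    (hab : norm (a * b) = norm a + norm b) (hcd : norm (c * d) = norm c + norm d)
    (hdb : norm d = norm b) : a = c ∧ b = d := by
  obtain ⟨e, rfl, rfl, he, -⟩ := exists_eq_mul_of_mul_eq_mul h hab hcd hdb.le
  obtain rfl : e = 1 := norm_eq_zero.1 (by omega)
  simp

open reduceCyclically in
theorem norm_le_norm_mul_self (x : FreeGroup α) : norm x ≤ norm (x * x) := by
  have hx : norm x = 2 * (conjugator x.toWord).length + (reduceCyclically x.toWord).length := by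
    conv_lhs => rw [norm, ← conj_conjugator_reduceCyclically x.toWord]
    simp only [List.length_append, invRev_length]
    ring
  have hxx : norm (x * x) =
      2 * (conjugator x.toWord).length + 2 * (reduceCyclically x.toWord).length := by
    rw [norm, ← pow_two, toWord_pow, reduce_flatten_replicate isReduced_toWord]
    simp
    ring
  omega

end Cancellation

section NielsenReduced

variable {α β : Type*} [DecidableEq β]

/-- Nielsen's conditions (N0)–(N2) for the family `v c`, where the letter `c = (a, b)` stands
for `a` or `a⁻¹` according to `b`. -/
structure IsNielsenReduced (v : α × Bool → FreeGroup β) : Prop where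
  ne_one : ∀ c, v c ≠ 1
  norm_le_norm_mul : ∀ c d, IsReduced [c, d] →
    norm (v c) ≤ norm (v c * v d) ∧ norm (v d) ≤ norm (v c * v d)
  norm_add_norm_lt : ∀ c d e, IsReduced [c, d, e] →
    norm (v c) + norm (v e) < norm (v c * v d) + norm (v d * v e)

namespace IsNielsenReduced

variable {v : α × Bool → FreeGroup β}

theorem norm_pos (hv : IsNielsenReduced v) (c : α × Bool) : 0 < norm (v c) :=
  Nat.pos_of_ne_zero fun h => hv.ne_one c (norm_eq_zero.1 h)

theorem exists_factorization_step (hv : IsNielsenReduced v) {c' c : α × Bool} (hcc : IsReduced [c', c])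
    {y s z : FreeGroup β} (hyz : norm (y * z) = norm y + norm z) (hsz : v c' = s * z)
    (hszn : norm (v c') = norm s + norm z)
    (hnext : norm (v c) + norm s < norm z + norm (v c' * v c)) :
    ∃ y' s' z', y * z * v c = y' * z' ∧ norm (y' * z') = norm y' + norm z' ∧
      v c = s' * z' ∧ norm (v c) = norm s' + norm z' ∧ norm y < norm y' ∧ 0 < norm z' ∧
      ∀ d, IsReduced [c, d] → norm (v d) + norm s' < norm z' + norm (v c * v d) := by
  obtain ⟨p, r, q, hp, hc, hpn, hcn, hpq⟩ := exists_maximal_cancellation (y * z) (v c)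
  have hrz : norm r < norm z := by
    by_contra! hzr
    obtain ⟨e, rfl, rfl, hrn, -⟩ := exists_eq_mul_of_mul_eq_mul hp.symm (hp ▸ hpn) hyz hzr
    have hcc' : norm (v c' * v c) ≤ norm s + norm e + norm q := by
      rw [hsz, hc, show s * z * ((e * z)⁻¹ * q) = s * (e⁻¹ * q) by group]
      have := norm_mul_le s (e⁻¹ * q)
      have := norm_mul_le e⁻¹ q
      rw [norm_inv_eq] at this
      omega
    omega
  obtain ⟨e, rfl, rfl, hzn, hpn'⟩ := exists_eq_mul_of_mul_eq_mul hp hyz (hp ▸ hpn) hrz.le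
  have hcc' : norm (v c' * v c) ≤ norm s + norm e + norm q := by
    rw [hsz, hc, show s * (e * r) * (r⁻¹ * q) = s * (e * q) by group]
    have := norm_mul_le s (e * q)
    have := norm_mul_le e q
    omega
  have hpqe : y * (e * r) * v c = y * e * q := by rw [hc]; group
  refine ⟨y * e, r⁻¹, q, hpqe, hpqe ▸ hpq, hc, by rw [norm_inv_eq]; exact hcn, by omega, ?_,
    fun d hd => ?_⟩
  · have := (hv.norm_le_norm_mul c' c hcc).1
    have := hv.norm_pos c
    omega
  · have := hv.norm_add_norm_lt c' c d
      (isReduced_cons_cons.2 ⟨(isReduced_cons_cons.1 hcc).1, hd⟩)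
    rw [norm_inv_eq]
    omega

/-- In the reduced form `y * z` of the product, `z` is the part of the last factor `v c = s * z`
that survives; the last conjunct bounds the cancelled part `s` against the next factor. -/
theorem exists_factorization (hv : IsNielsenReduced v) (L : List (α × Bool)) (c : α × Bool)
    (hL : IsReduced (L ++ [c])) :
    ∃ y s z, ((L ++ [c]).map v).prod = y * z ∧ norm (y * z) = norm y + norm z ∧
      v c = s * z ∧ norm (v c) = norm s + norm z ∧ L.length ≤ norm y ∧ 0 < norm z ∧
      ∀ d, IsReduced [c, d] → norm (v d) + norm s < norm z + norm (v c * v d) := by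
  induction L using List.reverseRecOn generalizing c with
  | nil =>
    refine ⟨1, 1, v c, by simp, by simp, by simp, by simp, by simp, hv.norm_pos c,
      fun d hd => ?_⟩
    have := (hv.norm_le_norm_mul c d hd).2
    have := hv.norm_pos c
    simp only [norm_one]
    omega
  | append_singleton M c' ih =>
    obtain ⟨y, s, z, hprod, hyz, hsz, hszn, hMy, -, hnext⟩ :=
      ih c' (hL.infix (List.prefix_append _ [c]).isInfix)
    have hcc : IsReduced [c', c] := hL.infix ⟨M, [], by simp⟩
    obtain ⟨y', s', z', hyz', hyzn', hsz', hszn', hyy', hz', hnext'⟩ :=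
      hv.exists_factorization_step hcc hyz hsz hszn (hnext c hcc)
    refine ⟨y', s', z', ?_, hyzn', hsz', hszn', ?_, hz', hnext'⟩
    · rw [List.map_append, List.prod_append, hprod, ← hyz']
      simp
    · simp only [List.length_append, List.length_singleton]
      omega

theorem length_le_norm_prod (hv : IsNielsenReduced v) {L : List (α × Bool)}
    (hL : IsReduced L) : L.length ≤ norm (L.map v).prod := by
  rcases List.eq_nil_or_concat L with rfl | ⟨M, c, rfl⟩
  · simp
  · rw [List.concat_eq_append] at hL ⊢
    obtain ⟨y, s, z, hprod, hyz, -, -, hMy, hz, -⟩ := hv.exists_factorization M c hL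
    rw [hprod, hyz, List.length_append, List.length_singleton]
    omega

theorem norm_le_norm_map [DecidableEq α] {f : FreeGroup α →* FreeGroup β}
    (hf : IsNielsenReduced fun c => f (FreeGroup.mk [c])) (x : FreeGroup α) :
    norm x ≤ norm (f x) := by
  rw [← mk_toWord (x := x), map_mk_eq_prod, norm_mk_of_isReduced isReduced_toWord]
  exact hf.length_le_norm_prod isReduced_toWord

end IsNielsenReduced

end NielsenReduced

section Automorphisms

variable {α : Type*}

def signAut (ε : α → Bool) : MulAut (FreeGroup α) :=
  MonoidHom.toMulEquiv (lift fun k => mk [(k, ε k)]) (lift fun k => mk [(k, ε k)])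
    (ext_hom _ _ fun k => by cases hk : ε k <;> simp [mk_singleton, hk])
    (ext_hom _ _ fun k => by cases hk : ε k <;> simp [mk_singleton, hk])

@[simp]
theorem signAut_of (ε : α → Bool) (k : α) : signAut ε (of k) = mk [(k, ε k)] :=
  lift_apply_of (f := fun k => mk [(k, ε k)])

theorem signAut_signAut (ε : α → Bool) (x : FreeGroup α) : signAut ε (signAut ε x) = x :=
  (signAut ε).apply_symm_apply x

variable [DecidableEq α]

def transvection (i j : α) (hij : i ≠ j) : MulAut (FreeGroup α) :=
  MonoidHom.toMulEquiv (lift fun k => if k = i then of i * of j else of k)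
    (lift fun k => if k = i then of i * (of j)⁻¹ else of k)
    (ext_hom _ _ fun k => by by_cases hk : k = i <;> simp [hk, hij.symm])
    (ext_hom _ _ fun k => by by_cases hk : k = i <;> simp [hk, hij.symm])

theorem transvection_of (i j : α) (hij : i ≠ j) (k : α) :
    transvection i j hij (of k) = if k = i then of i * of j else of k :=
  lift_apply_of

def nielsenSubgroup (α : Type*) [DecidableEq α] : Subgroup (MulAut (FreeGroup α)) :=
  Subgroup.closure
    {φ : MulAut (FreeGroup α) |
      (∃ i : α, ∀ j : α,
        φ (FreeGroup.of j) = if j = i then (FreeGroup.of i)⁻¹ else FreeGroup.of j) ∨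
      (∃ i j : α, i ≠ j ∧ ∀ k : α,
        φ (FreeGroup.of k) =
          if k = i then FreeGroup.of j else if k = j then FreeGroup.of i
          else FreeGroup.of k) ∨
      (∃ i j : α, i ≠ j ∧ ∀ k : α,
        φ (FreeGroup.of k) =
          if k = i then FreeGroup.of i * FreeGroup.of j else FreeGroup.of k)}

theorem signAut_decide_ne_mem (i : α) : signAut (fun k => decide (k ≠ i)) ∈ nielsenSubgroup α :=
  Subgroup.subset_closure <| .inl ⟨i, fun j => by by_cases h : j = i <;> simp [h, mk_singleton]⟩

theorem freeGroupCongr_swap_mem {i j : α} (hij : i ≠ j) :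
    freeGroupCongr (Equiv.swap i j) ∈ nielsenSubgroup α :=
  Subgroup.subset_closure <| .inr <| .inl ⟨i, j, hij, fun k => by
    simp only [freeGroupCongr_apply, map.of, Equiv.swap_apply_def]
    split_ifs <;> rfl⟩

theorem transvection_mem {i j : α} (hij : i ≠ j) : transvection i j hij ∈ nielsenSubgroup α :=
  Subgroup.subset_closure <| .inr <| .inr ⟨i, j, hij, transvection_of i j hij⟩

variable [Finite α]

theorem freeGroupCongr_mem (e : Equiv.Perm α) : freeGroupCongr e ∈ nielsenSubgroup α := by
  induction e using Equiv.Perm.swap_induction_on with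
  | one => exact (show freeGroupCongr (1 : Equiv.Perm α) = 1 by ext; simp) ▸ one_mem _
  | swap_mul f i j hij hf =>
    have : freeGroupCongr (Equiv.swap i j * f) =
        freeGroupCongr (Equiv.swap i j) * freeGroupCongr f := by
      ext; simp
    exact this ▸ mul_mem (freeGroupCongr_swap_mem hij) hf

theorem signAut_mem (ε : α → Bool) : signAut ε ∈ nielsenSubgroup α := by
  have := Fintype.ofFinite α
  suffices ∀ S : Finset α, ∀ ε : α → Bool, (∀ k, ε k = false → k ∈ S) →
      signAut ε ∈ nielsenSubgroup α from this _ ε fun k _ => Finset.mem_univ k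
  intro S
  induction S using Finset.induction_on with
  | empty =>
    intro ε hε
    have : signAut ε = 1 := by
      ext k
      cases hk : ε k
      · exact absurd (hε k hk) (Finset.notMem_empty k)
      · simp [hk, mk_singleton]
    exact this ▸ one_mem _
  | insert a S ha ih =>
    intro ε hε
    have h' := ih (Function.update ε a true) fun k hk => by
      by_cases hka : k = a
      · simp [hka] at hk
      · simpa [hka] using hε k (by simpa [hka] using hk)
    cases hεa : ε a
    · have : signAut ε =
          signAut (Function.update ε a true) * signAut fun k => decide (k ≠ a) := by
        ext k
        by_cases hka : k = a
        · subst hka; simp [hεa, mk_singleton]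
        · simp [hka, map_mk_singleton]
      exact this ▸ mul_mem h' (signAut_decide_ne_mem a)
    · rwa [Function.update_eq_self_iff.2 hεa.symm] at h'

theorem exists_mem_nielsenSubgroup_apply_mk_eq_mul {c d : α × Bool} (h : c.1 ≠ d.1) :
    ∃ E ∈ nielsenSubgroup α, E (mk [c]) = mk [c] * mk [d] ∧ ∀ k ≠ c.1, E (of k) = of k := by
  -- conjugate the transvection `of c.1 ↦ of c.1 * of d.1` by a sign change
  let ε : α → Bool := fun k => if k = c.1 then c.2 else d.2
  have hσc : signAut ε (of c.1) = mk [c] := by simp [ε]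
  have hσd : signAut ε (of d.1) = mk [d] := by simp [ε, h.symm]
  have hσc' : signAut ε (mk [c]) = of c.1 := by rw [← hσc, signAut_signAut]
  refine ⟨signAut ε * transvection c.1 d.1 h * signAut ε,
    mul_mem (mul_mem (signAut_mem _) (transvection_mem h)) (signAut_mem _), ?_, fun k hk => ?_⟩
  · rw [MulAut.mul_apply, MulAut.mul_apply, hσc', transvection_of, if_pos rfl, _root_.map_mul,
      hσc, hσd]
  · have hτ : transvection c.1 d.1 h (signAut ε (of k)) = signAut ε (of k) := by
      rw [signAut_of, map_mk_singleton, transvection_of, if_neg hk, mk_singleton]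
    rw [MulAut.mul_apply, MulAut.mul_apply, hτ, signAut_signAut]

theorem mem_nielsenSubgroup_of_norm_eq_one {ψ : MulAut (FreeGroup α)}
    (h : ∀ k, norm (ψ (of k)) = 1) : ψ ∈ nielsenSubgroup α := by
  choose c hc using fun k => exists_eq_mk_singleton_of_norm_eq_one (h k)
  have hinj : Function.Injective fun k => (c k).1 := by
    intro k k' (hkk : (c k).1 = (c k').1)
    by_cases hb : (c k).2 = (c k').2
    · exact of_injective (ψ.injective (by rw [hc, hc, Prod.ext hkk hb]))
    · refine absurd (ψ.injective ?_) (of_ne_inv_of k k')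
      rw [hc, _root_.map_inv, hc, inv_mk_singleton, ← hkk, ← Bool.eq_not_iff.2 hb]
  let e := Equiv.ofBijective _ (Finite.injective_iff_bijective.1 hinj)
  have : ψ = freeGroupCongr e * signAut fun k => (c k).2 := by
    ext k
    simp [hc, e, freeGroupCongr_apply, map.mk]
  exact this ▸ mul_mem (freeGroupCongr_mem e) (signAut_mem _)

end Automorphisms

section Minimal

variable {α : Type*} [Fintype α]

noncomputable def wordCode (L : List (α × Bool)) : ℕ :=
  Nat.ofDigits (Fintype.card (α × Bool) + 2) (L.map fun c => Fintype.equivFin (α × Bool) c)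

theorem wordCode_le_wordCode_of_append {P Q T : List (α × Bool)} (hPQ : P.length = Q.length)
    (h : wordCode (P ++ T) ≤ wordCode (Q ++ T)) : wordCode P ≤ wordCode Q := by
  simp only [wordCode, List.map_append, Nat.ofDigits_append, List.length_map, hPQ] at h
  exact Nat.le_of_add_le_add_right h

theorem eq_of_wordCode_eq {P Q : List (α × Bool)} (hPQ : P.length = Q.length)
    (h : wordCode P = wordCode Q) : P = Q := by
  have hlt (L : List (α × Bool)) : ∀ l ∈ L.map fun c => (Fintype.equivFin (α × Bool) c : ℕ),
      l < Fintype.card (α × Bool) + 2 := by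
    simp only [List.mem_map]
    rintro _ ⟨c, -, rfl⟩
    omega
  refine List.map_injective_iff.2 ?_
    (Nat.ofDigits_inj_of_len_eq (by omega) (by simpa) (hlt P) (hlt Q) h)
  exact Fin.val_injective.comp (Fintype.equivFin _).injective

variable [DecidableEq α]

/-- Tie-breaker between elements of equal length. Replacing the last `k ≤ norm x / 2` letters
of `x` changes only the second summand. -/
noncomputable def halvesCode (x : FreeGroup α) : ℕ :=
  wordCode (x.toWord.take ((norm x + 1) / 2)) + wordCode (x⁻¹.toWord.take ((norm x + 1) / 2))

theorem halvesCode_inv (x : FreeGroup α) : halvesCode x⁻¹ = halvesCode x := by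
  rw [halvesCode, halvesCode, norm_inv_eq, inv_inv, add_comm]

theorem wordCode_le_of_halvesCode_le {a b c : FreeGroup α}
    (hab : norm (a * b) = norm a + norm b) (hac : norm (a * c) = norm a + norm c)
    (hbc : norm b = norm c) (hba : norm b ≤ norm a)
    (h : halvesCode (a * b) ≤ halvesCode (a * c)) :
    wordCode b⁻¹.toWord ≤ wordCode c⁻¹.toWord := by
  set m := (norm (a * b) + 1) / 2
  have halves (d : FreeGroup α) (had : norm (a * d) = norm a + norm d) (hdb : norm d = norm b) :
      halvesCode (a * d) = wordCode (a.toWord.take m) +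
        wordCode (d⁻¹.toWord ++ a⁻¹.toWord.take (m - norm d)) := by
    have hm : (norm (a * d) + 1) / 2 = m := by omega
    have hda : norm (d⁻¹ * a⁻¹) = norm d⁻¹ + norm a⁻¹ := by
      rw [← mul_inv_rev, norm_inv_eq, norm_inv_eq, norm_inv_eq, had, add_comm]
    have hd : d⁻¹.toWord.length = norm d := norm_inv_eq
    rw [halvesCode, hm, mul_inv_rev, toWord_mul_of_norm_mul had, toWord_mul_of_norm_mul hda,
      List.take_append_of_le_length (by rw [← norm]; omega), List.take_append,
      List.take_of_length_le (l := d⁻¹.toWord) (by omega), hd]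
  rw [halves b hab rfl, halves c hac hbc.symm, hbc] at h
  exact wordCode_le_wordCode_of_append (by simpa [norm] using hbc) (Nat.le_of_add_le_add_left h)

noncomputable def nielsenWeight (x : FreeGroup α) : ℕ ×ₗ ℕ := toLex (norm x, halvesCode x)

theorem nielsenWeight_inv (x : FreeGroup α) : nielsenWeight x⁻¹ = nielsenWeight x := by
  rw [nielsenWeight, nielsenWeight, norm_inv_eq, halvesCode_inv]

theorem nielsenWeight_le_iff {x y : FreeGroup α} : nielsenWeight x ≤ nielsenWeight y ↔
    norm x < norm y ∨ norm x = norm y ∧ halvesCode x ≤ halvesCode y :=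
  Prod.Lex.toLex_le_toLex

theorem norm_le_norm_of_nielsenWeight_le {x y : FreeGroup α}
    (h : nielsenWeight x ≤ nielsenWeight y) : norm x ≤ norm y :=
  (nielsenWeight_le_iff.1 h).elim le_of_lt fun h => h.1.le

theorem nielsenWeight_map_mk_singleton {F : Type*} [FunLike F (FreeGroup α) (FreeGroup α)]
    [MonoidHomClass F (FreeGroup α) (FreeGroup α)] (f : F) (c : α × Bool) :
    nielsenWeight (f (mk [c])) = nielsenWeight (f (of c.1)) := by
  cases c with | mk a b => cases b <;> simp [map_mk_singleton, nielsenWeight_inv]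

noncomputable def nielsenComplexity (ψ : MulAut (FreeGroup α)) : ℕ ×ₗ ℕ :=
  ∑ k, nielsenWeight (ψ (of k))

def IsNielsenMinimal (ψ : MulAut (FreeGroup α)) : Prop :=
  ∀ E ∈ nielsenSubgroup α, nielsenComplexity ψ ≤ nielsenComplexity (ψ * E)

theorem exists_isNielsenMinimal (φ : MulAut (FreeGroup α)) :
    ∃ ψ, φ⁻¹ * ψ ∈ nielsenSubgroup α ∧ IsNielsenMinimal ψ := by
  obtain ⟨ψ, hψ, hmin⟩ := exists_minimalFor_of_wellFoundedLT
    (fun ψ => φ⁻¹ * ψ ∈ nielsenSubgroup α) nielsenComplexity ⟨φ, by simp⟩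
  refine ⟨ψ, hψ, fun E hE => ?_⟩
  have hψE : φ⁻¹ * (ψ * E) ∈ nielsenSubgroup α := mul_assoc φ⁻¹ ψ E ▸ mul_mem hψ hE
  exact (le_total _ _).elim (hmin hψE) id

namespace IsNielsenMinimal

variable {ψ : MulAut (FreeGroup α)}

theorem nielsenWeight_le (hψ : IsNielsenMinimal ψ) {E : MulAut (FreeGroup α)}
    (hE : E ∈ nielsenSubgroup α) {s : α} (hs : ∀ k ≠ s, E (of k) = of k) :
    nielsenWeight (ψ (of s)) ≤ nielsenWeight ((ψ * E) (of s)) := by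
  have h := hψ E hE
  have hrest : ∑ k ∈ Finset.univ.erase s, nielsenWeight ((ψ * E) (of k)) =
      ∑ k ∈ Finset.univ.erase s, nielsenWeight (ψ (of k)) :=
    Finset.sum_congr rfl fun k hk => by rw [MulAut.mul_apply, hs k (Finset.ne_of_mem_erase hk)]
  rw [nielsenComplexity, nielsenComplexity, ← Finset.add_sum_erase _ _ (Finset.mem_univ s),
    ← Finset.add_sum_erase _ _ (Finset.mem_univ s), hrest] at h
  exact le_of_add_le_add_right h

theorem nielsenWeight_le_mul (hψ : IsNielsenMinimal ψ) {c d : α × Bool} (h : c.1 ≠ d.1) :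
    nielsenWeight (ψ (mk [c])) ≤ nielsenWeight (ψ (mk [c]) * ψ (mk [d])) ∧
      nielsenWeight (ψ (mk [d])) ≤ nielsenWeight (ψ (mk [c]) * ψ (mk [d])) := by
  have key {c d : α × Bool} (h : c.1 ≠ d.1) :
      nielsenWeight (ψ (mk [c])) ≤ nielsenWeight (ψ (mk [c]) * ψ (mk [d])) := by
    obtain ⟨E, hE, hEc, hEk⟩ := exists_mem_nielsenSubgroup_apply_mk_eq_mul h
    have := hψ.nielsenWeight_le hE hEk
    rwa [← nielsenWeight_map_mk_singleton ψ c, ← nielsenWeight_map_mk_singleton (ψ * E) c,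
      MulAut.mul_apply, hEc, _root_.map_mul] at this
  refine ⟨key h, ?_⟩
  have := key (c := (d.1, !d.2)) (d := (c.1, !c.2)) h.symm
  rwa [← inv_mk_singleton, ← inv_mk_singleton, _root_.map_inv, _root_.map_inv, ← mul_inv_rev,
    nielsenWeight_inv, nielsenWeight_inv] at this

theorem norm_le_norm_mul (hψ : IsNielsenMinimal ψ) {c d : α × Bool} (h : IsReduced [c, d]) :
    norm (ψ (mk [c])) ≤ norm (ψ (mk [c]) * ψ (mk [d])) ∧
      norm (ψ (mk [d])) ≤ norm (ψ (mk [c]) * ψ (mk [d])) := by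
  by_cases hcd : c.1 = d.1
  · obtain rfl : c = d := Prod.ext hcd ((isReduced_cons_cons.1 h).1 hcd)
    exact ⟨norm_le_norm_mul_self _, norm_le_norm_mul_self _⟩
  · obtain ⟨h₁, h₂⟩ := hψ.nielsenWeight_le_mul hcd
    exact ⟨norm_le_norm_of_nielsenWeight_le h₁, norm_le_norm_of_nielsenWeight_le h₂⟩

theorem wordCode_inv_le (hψ : IsNielsenMinimal ψ) {c d : α × Bool} (h : c.1 ≠ d.1)
    {p r q : FreeGroup α} (hc : ψ (mk [c]) = p * r) (hd : ψ (mk [d]) = r⁻¹ * q)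
    (hpr : norm (p * r) = norm p + norm r) (hpq : norm (p * q) = norm p + norm q)
    (hrq : norm r = norm q) (hrp : norm r ≤ norm p) :
    wordCode r⁻¹.toWord ≤ wordCode q⁻¹.toWord := by
  obtain ⟨hw, -⟩ := hψ.nielsenWeight_le_mul h
  rw [hc, hd, show p * r * (r⁻¹ * q) = p * q by group, nielsenWeight_le_iff] at hw
  exact wordCode_le_of_halvesCode_le hpr hpq hrq hrp (hw.resolve_left (by omega)).2

theorem wordCode_inv_le_of_right (hψ : IsNielsenMinimal ψ) {d e : α × Bool} (h : d.1 ≠ e.1)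
    {p r q : FreeGroup α} (hd : ψ (mk [d]) = p * r) (he : ψ (mk [e]) = r⁻¹ * q)
    (hrq : norm (r⁻¹ * q) = norm r + norm q) (hpq : norm (p * q) = norm p + norm q)
    (hpr : norm p = norm r) (hrq' : norm r ≤ norm q) :
    wordCode r⁻¹.toWord ≤ wordCode p.toWord := by
  have hqr : q⁻¹ * r = (r⁻¹ * q)⁻¹ := by group
  have hqp : q⁻¹ * p⁻¹ = (p * q)⁻¹ := by group
  simpa using hψ.wordCode_inv_le (c := (e.1, !e.2)) (d := (d.1, !d.2)) (p := q⁻¹) (r := r)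
    (q := p⁻¹) h.symm (by rw [← inv_mk_singleton, _root_.map_inv, he, hqr])
    (by rw [← inv_mk_singleton, _root_.map_inv, hd]; group)
    (by rw [hqr, norm_inv_eq, hrq, norm_inv_eq, add_comm])
    (by rw [hqp, norm_inv_eq, hpq, norm_inv_eq, norm_inv_eq, add_comm])
    (by rw [norm_inv_eq]; omega) (by rw [norm_inv_eq]; omega)

/-- If (N2) failed, `ψ (mk [d]) = r₁⁻¹ * r₂` would be cancelled exactly in half from both sides,
and comparing the tie-breaker before and after the two moves forces `r₁ = r₂`. -/
theorem norm_add_norm_lt (hψ : IsNielsenMinimal ψ) {c d e : α × Bool}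
    (h : IsReduced [c, d, e]) :
    norm (ψ (mk [c])) + norm (ψ (mk [e])) <
      norm (ψ (mk [c]) * ψ (mk [d])) + norm (ψ (mk [d]) * ψ (mk [e])) := by
  obtain ⟨hu, hx⟩ := hψ.norm_le_norm_mul (h.infix ⟨[], [e], rfl⟩)
  obtain ⟨hx', hw⟩ := hψ.norm_le_norm_mul (h.infix ⟨[c], [], rfl⟩)
  by_contra! hle
  obtain ⟨p₁, r₁, q₁, hu₁, hx₁, hun, hxn₁, hux⟩ :=
    exists_maximal_cancellation (ψ (mk [c])) (ψ (mk [d]))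
  obtain ⟨p₂, r₂, q₂, hx₂, hw₂, hxn₂, hwn, hxw⟩ :=
    exists_maximal_cancellation (ψ (mk [d])) (ψ (mk [e]))
  obtain ⟨hrp, hqr⟩ := eq_of_mul_eq_mul_of_norm_eq (hx₁.symm.trans hx₂)
    (by rw [← hx₁, hxn₁, norm_inv_eq]) (hx₂ ▸ hxn₂) (by omega)
  suffices r₁ = r₂ from
    ψ.map_ne_one_iff.2 (mk_singleton_ne_one d) (by rw [hx₁, hqr, this, inv_mul_cancel])
  by_cases h₁ : c.1 = d.1
  · obtain rfl : c = d := Prod.ext h₁ ((isReduced_cons_cons.1 h).1 h₁)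
    exact (eq_of_mul_eq_mul_of_norm_eq (hu₁.symm.trans hx₂) (hu₁ ▸ hun) (hx₂ ▸ hxn₂)
      (by omega)).2
  by_cases h₂ : d.1 = e.1
  · obtain rfl : d = e := Prod.ext h₂ ((isReduced_cons_cons.1 (isReduced_cons_cons.1 h).2).1 h₂)
    exact inv_injective (eq_of_mul_eq_mul_of_norm_eq (hx₁.symm.trans hw₂)
      (by rw [← hx₁, hxn₁, norm_inv_eq]) (by rw [← hw₂, hwn, norm_inv_eq]) (by omega)).1
  have hux' : ψ (mk [c]) * ψ (mk [d]) = p₁ * q₁ := by rw [hu₁, hx₁]; group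
  have hxw' : ψ (mk [d]) * ψ (mk [e]) = p₂ * q₂ := by rw [hx₂, hw₂]; group
  have hA := hψ.wordCode_inv_le h₁ hu₁ hx₁ (hu₁ ▸ hun) (hux' ▸ hux) (by omega) (by omega)
  have hB := hψ.wordCode_inv_le_of_right h₂ hx₂ hw₂ (hw₂ ▸ hwn) (hxw' ▸ hxw) (by omega)
    (by omega)
  rw [hqr] at hA
  rw [← hrp] at hB
  refine inv_injective (toWord_injective (eq_of_wordCode_eq ?_ (le_antisymm hA hB)))
  change norm r₁⁻¹ = norm r₂⁻¹
  rw [norm_inv_eq, norm_inv_eq]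
  omega

theorem isNielsenReduced (hψ : IsNielsenMinimal ψ) : IsNielsenReduced fun c => ψ (mk [c]) where
  ne_one c := ψ.map_ne_one_iff.2 (mk_singleton_ne_one c)
  norm_le_norm_mul _ _ := hψ.norm_le_norm_mul
  norm_add_norm_lt _ _ _ := hψ.norm_add_norm_lt

end IsNielsenMinimal

end Minimal

theorem nielsenSubgroup_eq_top {α : Type*} [DecidableEq α] [Finite α] :
    nielsenSubgroup α = ⊤ := by
  have := Fintype.ofFinite α
  refine (Subgroup.eq_top_iff' _).2 fun φ => ?_
  obtain ⟨ψ, hφψ, hψ⟩ := exists_isNielsenMinimal φ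
  have hψ' : ψ⁻¹ ∈ nielsenSubgroup α := mem_nielsenSubgroup_of_norm_eq_one fun k => by
    have := hψ.isNielsenReduced.norm_le_norm_map (f := ψ.toMonoidHom) (ψ⁻¹ (of k))
    have := norm_eq_zero.not.2 ((ψ⁻¹).map_ne_one_iff.2 (of_ne_one k))
    simp only [MulEquiv.coe_toMonoidHom, MulAut.inv_apply, MulEquiv.apply_symm_apply,
      norm_of] at *
    omega
  simpa using mul_mem (inv_mem hψ') (inv_mem hφψ)

end FreeGroup

/-- The automorphism group of the free group on `n` generators is generated by the
elementary Nielsen automorphisms: (a) inverting a generator, (b) interchanging two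
generators, and (c) multiplying a generator on the right by another generator. -/
theorem freeGroup_aut_generated_by_nielsen (n : ℕ) :
    Subgroup.closure
      {φ : MulAut (FreeGroup (Fin n)) |
        (∃ i : Fin n, ∀ j : Fin n,
          φ (FreeGroup.of j) = if j = i then (FreeGroup.of i)⁻¹ else FreeGroup.of j) ∨
        (∃ i j : Fin n, i ≠ j ∧ ∀ k : Fin n,
          φ (FreeGroup.of k) =
            if k = i then FreeGroup.of j else if k = j then FreeGroup.of i
            else FreeGroup.of k) ∨
        (∃ i j : Fin n, i ≠ j ∧ ∀ k : Fin n,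
          φ (FreeGroup.of k) =
            if k = i then FreeGroup.of i * FreeGroup.of j else FreeGroup.of k)} = ⊤ :=
  FreeGroup.nielsenSubgroup_eq_top
end

section
/- The double full-rotation loop in SO(3) is null-homotopic: let δ : [0,1] → SO(3) be the loop δ(t) = the rotation about the third coordinate axis through angle 4πt, i.e. the matrix with rows (cos 4πt, −sin 4πt, 0), (sin 4πt, cos 4πt, 0), (0,0,1), so δ(0) = δ(1) = 1. Then δ, regarded as a Path in SO(3) from 1 to 1, is path-homotopic (rel endpoints) to the constant loop at the identity. -/
open Real Matrix

/-- `SO(3)`: the subgroup of the orthogonal group of `3 × 3` real matrices consisting of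
matrices of determinant `1`, topologized as a subspace of the `3 × 3` real matrices. -/
abbrev SO3 : Type := Matrix.specialOrthogonalGroup (Fin 3) ℝ

/-- The matrix of rotation about the third coordinate axis through angle `θ`. -/
noncomputable def rotMatrix (θ : ℝ) : Matrix (Fin 3) (Fin 3) ℝ :=
  !![Real.cos θ, -Real.sin θ, 0; Real.sin θ, Real.cos θ, 0; 0, 0, 1]

lemma rotMatrix_mem (θ : ℝ) : rotMatrix θ ∈ Matrix.specialOrthogonalGroup (Fin 3) ℝ := by
  rw [Matrix.mem_specialOrthogonalGroup_iff]
  constructor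
  · rw [Matrix.mem_orthogonalGroup_iff]
    ext i j
    fin_cases i <;> fin_cases j <;>
      simp [rotMatrix, Matrix.mul_apply, Matrix.star_apply, Fin.sum_univ_three,
        Matrix.one_apply] <;>
      ring_nf <;>
      simp [Real.sin_sq_add_cos_sq, Real.cos_sq_add_sin_sq]
  · simp [rotMatrix, Matrix.det_fin_three]
    ring_nf
    simp [Real.sin_sq_add_cos_sq, Real.cos_sq_add_sin_sq]

lemma rotMatrix_zero : rotMatrix 0 = 1 := by
  ext i j
  fin_cases i <;> fin_cases j <;>
    simp [rotMatrix, Matrix.one_apply, Matrix.vecHead, Matrix.vecTail]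

lemma rotMatrix_four_pi : rotMatrix (4 * π) = 1 := by
  have hc : Real.cos (4 * π) = 1 := by
    rw [show (4 : ℝ) * π = 2 * π + 2 * π by ring, Real.cos_add_two_pi, Real.cos_two_pi]
  have hs : Real.sin (4 * π) = 0 := by
    rw [show (4 : ℝ) * π = 2 * π + 2 * π by ring, Real.sin_add_two_pi, Real.sin_two_pi]
  ext i j
  fin_cases i <;> fin_cases j <;>
    simp [rotMatrix, Matrix.one_apply, hc, hs, Matrix.vecHead, Matrix.vecTail]

/-- The loop `δ(t) = ` rotation through angle `4πt` about the third coordinate axis,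
regarded as a path in `SO(3)` from the identity to the identity. -/
noncomputable def doubleRotationLoop : Path (1 : SO3) (1 : SO3) where
  toFun t := ⟨rotMatrix (4 * π * (t : ℝ)), rotMatrix_mem _⟩
  continuous_toFun := by
    apply Continuous.subtype_mk
    exact (by
      apply continuous_matrix
      intro i j
      fin_cases i <;> fin_cases j <;> simp [rotMatrix] <;> fun_prop :
        Continuous fun t : ℝ => rotMatrix (4 * π * t)).comp continuous_subtype_val
  source' := by
    apply Subtype.ext
    simp [rotMatrix_zero]
  target' := by
    apply Subtype.ext
    simp [rotMatrix_four_pi]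

/-!
The quaternion conjugation map `q ↦ (v ↦ q v q⁻¹)` is a continuous map `S³ → SO(3)` that
doubles rotation angles, so it carries the great circle `t ↦ cos 2πt + (sin 2πt) k`, traversed
once, onto the double rotation loop. That circle misses `j`, and by stereographic projection
`S³ \ {j}` is homeomorphic to a real vector space, hence simply connected. So the circle is
null-homotopic in `S³`, and its image is null-homotopic in `SO(3)`.
-/

open Metric Quaternion

section Sphere

variable {E : Type*} [NormedAddCommGroup E] [InnerProductSpace ℝ E]

theorem isSimplyConnected_sphere_compl_singleton (v : sphere (0 : E) 1) :
    IsSimplyConnected ({v}ᶜ : Set (sphere (0 : E) 1)) := by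
  let e : ({v}ᶜ : Set (sphere (0 : E) 1)) ≃ₜ (ℝ ∙ (v : E))ᗮ :=
    (stereographic (norm_eq_of_mem_sphere v)).toHomeomorphSourceTarget.trans
      (Homeomorph.Set.univ _)
  have := e.contractibleSpace
  exact SimplyConnectedSpace.ofContractible _

theorem Path.homotopic_refl_of_forall_ne_sphere {x : sphere (0 : E) 1} (γ : Path x x)
    (v : sphere (0 : E) 1) (hγ : ∀ t, γ t ≠ v) : γ.Homotopic (Path.refl x) := by
  obtain ⟨F, -⟩ := (isSimplyConnected_iff_exists_homotopy_refl_forall_mem.mp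
    (isSimplyConnected_sphere_compl_singleton v)).2 x γ hγ
  exact ⟨F⟩

end Sphere

namespace Quaternion

theorem mem_sphere_zero_one_iff_normSq_eq_one {q : ℍ} :
    q ∈ sphere (0 : ℍ) 1 ↔ normSq q = 1 := by
  rw [mem_sphere_zero_iff_norm, norm_eq_sqrt_real_inner, inner_self, sqrt_eq_one]

/-- The Euler–Rodrigues matrix of `q = a + b i + c j + d k`: for a unit quaternion it is the
matrix of `v ↦ q v q⁻¹` on the imaginary quaternions in the basis `i, j, k`. -/
def toRotationMatrix (q : ℍ) : Matrix (Fin 3) (Fin 3) ℝ :=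
  let a := q.re; let b := q.imI; let c := q.imJ; let d := q.imK
  !![a ^ 2 + b ^ 2 - c ^ 2 - d ^ 2, 2 * (b * c - a * d), 2 * (b * d + a * c);
     2 * (b * c + a * d), a ^ 2 - b ^ 2 + c ^ 2 - d ^ 2, 2 * (c * d - a * b);
     2 * (b * d - a * c), 2 * (c * d + a * b), a ^ 2 - b ^ 2 - c ^ 2 + d ^ 2]

theorem toRotationMatrix_mul_transpose (q : ℍ) :
    q.toRotationMatrix * q.toRotationMatrixᵀ = normSq q ^ 2 • (1 : Matrix (Fin 3) (Fin 3) ℝ) := by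
  ext i j
  fin_cases i <;> fin_cases j <;>
    simp [toRotationMatrix, mul_apply, Fin.sum_univ_three, normSq_def'] <;> ring

theorem det_toRotationMatrix (q : ℍ) : q.toRotationMatrix.det = normSq q ^ 3 := by
  simp [toRotationMatrix, det_fin_three, normSq_def']
  ring

theorem toRotationMatrix_mem_specialOrthogonalGroup {q : ℍ} (hq : normSq q = 1) :
    q.toRotationMatrix ∈ specialOrthogonalGroup (Fin 3) ℝ := by
  rw [mem_specialOrthogonalGroup_iff, mem_orthogonalGroup_iff, toRotationMatrix_mul_transpose,
    det_toRotationMatrix, hq]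
  simp

theorem toRotationMatrix_one : toRotationMatrix 1 = 1 := by
  ext i j
  fin_cases i <;> fin_cases j <;> simp [toRotationMatrix]

theorem continuous_toRotationMatrix : Continuous toRotationMatrix := by
  refine continuous_matrix fun i j => ?_
  have := continuous_re; have := continuous_imI; have := continuous_imJ; have := continuous_imK
  fin_cases i <;> fin_cases j <;> simp [toRotationMatrix] <;> fun_prop

end Quaternion

noncomputable def unitQuaternionToSO3 : C(sphere (0 : ℍ) 1, SO3) where
  toFun q := ⟨toRotationMatrix q,
    toRotationMatrix_mem_specialOrthogonalGroup (mem_sphere_zero_one_iff_normSq_eq_one.1 q.2)⟩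
  continuous_toFun := (continuous_toRotationMatrix.comp continuous_subtype_val).subtype_mk _

theorem unitQuaternionToSO3_one : unitQuaternionToSO3 1 = 1 :=
  Subtype.ext toRotationMatrix_one

noncomputable def cosAddSinK (θ : ℝ) : ℍ := ⟨cos θ, 0, 0, sin θ⟩

section CosAddSinK

variable (θ : ℝ)

@[simp] theorem cosAddSinK_re : (cosAddSinK θ).re = cos θ := rfl
@[simp] theorem cosAddSinK_imI : (cosAddSinK θ).imI = 0 := rfl
@[simp] theorem cosAddSinK_imJ : (cosAddSinK θ).imJ = 0 := rfl
@[simp] theorem cosAddSinK_imK : (cosAddSinK θ).imK = sin θ := rfl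

theorem normSq_cosAddSinK : normSq (cosAddSinK θ) = 1 := by
  simp [normSq_def']

theorem toRotationMatrix_cosAddSinK : toRotationMatrix (cosAddSinK θ) = rotMatrix (2 * θ) := by
  ext i j
  fin_cases i <;> fin_cases j <;>
    simp [toRotationMatrix, rotMatrix, cos_two_mul, sin_two_mul] <;>
    nlinarith [sin_sq_add_cos_sq θ]

end CosAddSinK

theorem continuous_cosAddSinK : Continuous cosAddSinK := by
  have h : cosAddSinK = fun θ => (cos θ : ℍ) + sin θ • cosAddSinK (π / 2) := by
    ext θ <;> simp
  rw [h]
  exact (continuous_coe.comp continuous_cos).add (continuous_sin.smul continuous_const)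

noncomputable def kGreatCircleLoop : Path (1 : sphere (0 : ℍ) 1) 1 where
  toFun t := ⟨cosAddSinK (2 * π * t),
    mem_sphere_zero_one_iff_normSq_eq_one.2 (normSq_cosAddSinK _)⟩
  continuous_toFun :=
    ((continuous_cosAddSinK.comp (by fun_prop)).comp continuous_subtype_val).subtype_mk _
  source' := by ext <;> simp
  target' := by ext <;> simp

theorem kGreatCircleLoop_homotopic_refl : kGreatCircleLoop.Homotopic (Path.refl 1) := by
  refine kGreatCircleLoop.homotopic_refl_of_forall_ne_sphere
    ⟨⟨0, 0, 1, 0⟩, mem_sphere_zero_one_iff_normSq_eq_one.2 ((normSq_def' _).trans (by norm_num))⟩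
    fun t h => ?_
  simpa [kGreatCircleLoop] using congrArg (fun q : sphere (0 : ℍ) 1 => (q : ℍ).imJ) h

theorem kGreatCircleLoop_map_unitQuaternionToSO3 :
    (kGreatCircleLoop.map unitQuaternionToSO3.continuous).cast
      unitQuaternionToSO3_one.symm unitQuaternionToSO3_one.symm = doubleRotationLoop := by
  refine Path.ext (funext fun t => Subtype.ext ?_)
  change toRotationMatrix (cosAddSinK (2 * π * t)) = rotMatrix (4 * π * t)
  rw [toRotationMatrix_cosAddSinK]
  congr 1
  ring

/-- The double full-rotation loop in `SO(3)` is null-homotopic: it is path-homotopic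
(rel endpoints) to the constant loop at the identity. -/
theorem doubleRotationLoop_nullhomotopic :
    doubleRotationLoop.Homotopic (Path.refl (1 : SO3)) := by
  have h := (kGreatCircleLoop_homotopic_refl.map unitQuaternionToSO3).pathCast
    unitQuaternionToSO3_one.symm unitQuaternionToSO3_one.symm
  rw [kGreatCircleLoop_map_unitQuaternionToSO3] at h
  convert h using 1
  ext t : 2
  simp [unitQuaternionToSO3_one]
end

section
/- Let p : E → X be a covering map between topological spaces, let e : E, and let n ≥ 2 be a natural number. Then the map HomotopyGroup n E e → HomotopyGroup n X (p e) induced by postcomposition with p (i.e., the descent to homotopy classes of the map sending a based n-loop γ to p ∘ γ) is a bijection. -/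
/-!
Injectivity is homotopy lifting: a homotopy rel boundary between `p ∘ γ₀` and `p ∘ γ₁` lifts to
one between `γ₀` and `γ₁`, since the lifts agree at a boundary point. For surjectivity, the cube
is simply connected and locally path-connected, so an `n`-loop in `X` based at `p e` lifts to a
map of the cube into `E` sending `0` to `e`. For `n ≥ 2` the boundary of the cube is connected and
is mapped into the discrete fibre over `p e`, so the lift is again an `n`-loop, based at `e`.
-/

open Topology.Homotopy
open scoped unitInterval Topology

instance ContractibleSpace.pi {ι : Type*} {Z : ι → Type*} [∀ i, TopologicalSpace (Z i)]
    [∀ i, ContractibleSpace (Z i)] : ContractibleSpace (∀ i, Z i) := by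
  rw [contractible_iff_id_nullhomotopic]
  choose z hz using fun i ↦ id_nullhomotopic (Z i)
  exact ⟨z, ⟨ContinuousMap.Homotopy.piMap fun i ↦ (hz i).some⟩⟩

namespace unitInterval

instance : ContractibleSpace I :=
  (convex_Icc 0 1).contractibleSpace ⟨0, zero_mem⟩

instance : LocallyPathConnectedSpace I :=
  (convex_Icc 0 1).locallyPathConnectedSpace

end unitInterval

namespace Cube

theorem isPreconnected_setOf_apply_eq {N : Type*} (i : N) (a : I) :
    IsPreconnected {y : I^N | y i = a} := by
  classical
  have : {y : I^N | y i = a} = Set.range (Function.update · i a) := by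
    ext y
    exact ⟨fun hy ↦ ⟨y, hy ▸ Function.update_eq_self i y⟩,
      by rintro ⟨z, rfl⟩; exact Function.update_self i a z⟩
  rw [this]
  exact isPreconnected_range (by fun_prop)

theorem isPreconnected_boundary {N : Type*} [Nontrivial N] : IsPreconnected (boundary N) := by
  classical
  refine isPreconnected_of_forall 0 fun y ⟨i, hi⟩ ↦ ?_
  obtain ⟨k, hki⟩ := exists_ne i
  refine ⟨{w | w i = y i} ∪ {w | w k = 0}, ?_, Or.inr rfl, Or.inl rfl, ?_⟩
  · rintro w (hw | hw)
    exacts [⟨i, hw ▸ hi⟩, ⟨k, Or.inl hw⟩]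
  · refine (isPreconnected_setOf_apply_eq i (y i)).union (Function.update (0 : I^N) i (y i))
      ?_ ?_ (isPreconnected_setOf_apply_eq k 0)
    · simp
    · simp [hki]

theorem zero_mem_boundary {N : Type*} [Nonempty N] : (0 : I^N) ∈ boundary N :=
  ⟨Classical.arbitrary N, Or.inl rfl⟩

end Cube

theorem IsCoveringMap.exists_genLoop_lift {E X N : Type*} [TopologicalSpace E] [TopologicalSpace X]
    [Nontrivial N] {p : E → X} (hp : IsCoveringMap p) (e : E) (γ : Ω^ N X (p e)) :
    ∃ Γ : Ω^ N E e, ∀ y, p (Γ y) = γ y := by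
  obtain ⟨Γ, ⟨hΓ₀, hΓ⟩, -⟩ :=
    hp.existsUnique_continuousMap_lifts γ.1 0 e (GenLoop.boundary γ 0 Cube.zero_mem_boundary).symm
  have hΓ_fiber (y : I^N) (hy : y ∈ Cube.boundary N) : p (Γ y) = p e :=
    (congrFun hΓ y).trans (GenLoop.boundary γ y hy)
  have hΓ_boundary (y : I^N) (hy : y ∈ Cube.boundary N) : Γ y = e :=
    (hp.constOn_of_comp Cube.isPreconnected_boundary Γ.continuous.continuousOn
      (fun a ha a' ha' ↦ (hΓ_fiber a ha).trans (hΓ_fiber a' ha').symm)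
      hy Cube.zero_mem_boundary).trans hΓ₀
  exact ⟨⟨Γ, hΓ_boundary⟩, congrFun hΓ⟩

/-- A covering map induces a bijection on all homotopy groups `π_n` with `n ≥ 2`.
The induced map is the descent to homotopy classes of the map sending a based
`n`-loop `γ` to `p ∘ γ`. -/
theorem covering_map_bijective_on_higher_homotopy_groups
    {E X : Type*} [TopologicalSpace E] [TopologicalSpace X]
    (p : E → X) (hp : IsCoveringMap p) (e : E) (n : ℕ) (hn : 2 ≤ n) :
    Function.Bijective
      (Quotient.map
        (fun γ : GenLoop (Fin n) E e =>
          (⟨(⟨p, hp.continuous⟩ : C(E, X)).comp γ.1, fun y hy => by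
              simp only [ContinuousMap.comp_apply, ContinuousMap.coe_mk]
              rw [γ.2 y hy]⟩ : GenLoop (Fin n) X (p e)))
        (fun γ₁ γ₂ h => h.map fun H => H.compContinuousMap ⟨p, hp.continuous⟩) :
        HomotopyGroup (Fin n) E e → HomotopyGroup (Fin n) X (p e)) := by
  have : Nontrivial (Fin n) := Fin.nontrivial_iff_two_le.mpr hn
  constructor
  · rintro ⟨γ₀⟩ ⟨γ₁⟩ h
    refine Quotient.sound
      ((hp.homotopicRel_iff_comp ⟨0, Cube.zero_mem_boundary, ?_⟩).mpr (Quotient.exact h))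
    exact (GenLoop.boundary γ₀ 0 Cube.zero_mem_boundary).trans
      (GenLoop.boundary γ₁ 0 Cube.zero_mem_boundary).symm
  · rintro ⟨γ⟩
    obtain ⟨Γ, hΓ⟩ := hp.exists_genLoop_lift e γ
    exact ⟨⟦Γ⟧, congrArg _ (GenLoop.ext _ _ hΓ)⟩
end

section
/- Let M be the mapping torus of the antipodal map of the 2-sphere. The map S² × ℝ → M sending (x, t) to [x, t] descends to a well-defined continuous map p : S² × AddCircle (2 : ℝ) → M (well-defined because [x, t+2] = [x, t] in M). The map p is a covering map, and every fiber of p has exactly two elements. In other words, S² × S¹ is a two-sheeted covering space of S²⨯S¹ (its orientation double cover). -/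
/-!
`S² × ℝ/2ℤ` carries the fixed-point-free involution `σ (x, s) = (-x, s + 1)`, and two of its
points have the same image in the mapping torus exactly when they lie in one `σ`-orbit
`{e, σ e}`. So `p` is the quotient map of the free action of `ℤ/2` generated by `σ`; such an
action is a covering-space action because, the space being Hausdorff, `e` and `σ e` have
disjoint neighbourhoods. The fibres are the orbits, of size two.
-/

/-- The unit 2-sphere in euclidean 3-space. -/
abbrev S2 : Type := Metric.sphere (0 : EuclideanSpace ℝ (Fin 3)) 1

/-- The relation generating the mapping torus of the antipodal map: `(x, t) ∼ (-x, t+1)`. -/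
def mtRel : S2 × ℝ → S2 × ℝ → Prop := fun a b => b.1 = -a.1 ∧ b.2 = a.2 + 1

/-- The mapping torus of the antipodal map of the 2-sphere (the twisted product `S²⨯S¹`),
i.e. the quotient of `S² × ℝ` by the equivalence relation generated by `(x,t) ∼ (-x,t+1)`,
with the quotient topology. -/
abbrev MT : Type := Quot mtRel

open Function Topology

namespace Function.Involutive

variable {α : Type*} {σ : α → α}

abbrev zmodTwoAddAction (hσ : Involutive σ) : AddAction (ZMod 2) α where
  vadd k a := if k = 0 then a else σ a
  zero_vadd _ := if_pos rfl
  add_vadd j k a := by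
    change (if j + k = 0 then a else σ a) = if j = 0 then (if k = 0 then a else σ a)
      else σ (if k = 0 then a else σ a)
    fin_cases j <;> fin_cases k <;> [rfl; rfl; rfl; exact (hσ a).symm]

lemma mem_orbit_zmodTwo_iff (hσ : Involutive σ) {a b : α} :
    letI := hσ.zmodTwoAddAction
    a ∈ AddAction.orbit (ZMod 2) b ↔ a = b ∨ a = σ b := by
  let := hσ.zmodTwoAddAction
  rw [AddAction.mem_orbit_iff, eq_comm (a := a), eq_comm (a := a)]
  constructor
  · rintro ⟨k, rfl⟩
    fin_cases k
    exacts [.inl rfl, .inr rfl]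
  · rintro (h | h)
    exacts [⟨0, h⟩, ⟨1, h⟩]

end Function.Involutive

section Involution

variable {E X : Type*} {f : E → X} {σ : E → E}

theorem Nat.card_preimage_singleton_eq_two (hfree : ∀ e, σ e ≠ e)
    (hfib : ∀ e₁ e₂, f e₁ = f e₂ ↔ e₁ = e₂ ∨ e₁ = σ e₂) (e : E) :
    Nat.card (f ⁻¹' {f e}) = 2 := by
  have hfiber : f ⁻¹' {f e} = {e, σ e} := by
    ext e'
    simp [hfib]
  rw [hfiber, Nat.card_coe_set_eq, Set.ncard_pair (hfree e).symm]

variable [TopologicalSpace E] [TopologicalSpace X]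

theorem Topology.IsQuotientMap.isCoveringMap_of_involutive [T2Space E] (hf : IsQuotientMap f)
    (hσ : Involutive σ) (hσc : Continuous σ) (hfree : ∀ e, σ e ≠ e)
    (hfib : ∀ e₁ e₂, f e₁ = f e₂ ↔ e₁ = e₂ ∨ e₁ = σ e₂) : IsCoveringMap f := by
  let := hσ.zmodTwoAddAction
  have hquot : IsAddQuotientCoveringMap f (ZMod 2) :=
    { hf with
      continuous_const_vadd := fun k => by
        fin_cases k
        exacts [continuous_id, hσc]
      apply_eq_iff_mem_orbit := (hfib _ _).trans hσ.mem_orbit_zmodTwo_iff.symm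
      disjoint := fun e => by
        obtain ⟨u, v, hu, hv, heu, hσv, huv⟩ := t2_separation (hfree e).symm
        have hU : u ∩ σ ⁻¹' v ∈ 𝓝 e := Filter.inter_mem (hu.mem_nhds heu)
          (hσc.continuousAt.preimage_mem_nhds (hv.mem_nhds hσv))
        refine ⟨u ∩ σ ⁻¹' v, hU, fun k ⟨_, ⟨e', he', hk⟩, hu'⟩ => ?_⟩
        fin_cases k
        · rfl
        · exact (huv.ne_of_mem hu'.1 he'.2 hk.symm).elim }
  exact hquot.isCoveringMap

end Involution

noncomputable def antipodalShift (e : S2 × AddCircle (2 : ℝ)) : S2 × AddCircle (2 : ℝ) :=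
  (-e.1, e.2 + ((1 : ℝ) : AddCircle (2 : ℝ)))

lemma antipodalShift_coe (x : S2) (t : ℝ) :
    antipodalShift (x, (t : AddCircle (2 : ℝ))) = (-x, ((t + 1 : ℝ) : AddCircle (2 : ℝ))) := by
  rw [antipodalShift, AddCircle.coe_add]

lemma involutive_antipodalShift : Involutive antipodalShift := fun e => by
  refine Prod.ext (neg_neg e.1) ?_
  rw [antipodalShift, antipodalShift, add_assoc, ← AddCircle.coe_add, one_add_one_eq_two,
    AddCircle.coe_period, add_zero]

lemma continuous_antipodalShift : Continuous antipodalShift :=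
  continuous_fst.neg.prodMk (continuous_snd.add continuous_const)

lemma antipodalShift_ne_self (e : S2 × AddCircle (2 : ℝ)) : antipodalShift e ≠ e :=
  fun h => ne_neg_of_mem_unit_sphere ℝ e.1 (congrArg Prod.fst h).symm

namespace MT

lemma mk_neg_add_one (x : S2) (t : ℝ) : Quot.mk mtRel (-x, t + 1) = Quot.mk mtRel (x, t) :=
  (Quot.sound ⟨rfl, rfl⟩).symm

lemma mk_add_two (x : S2) (t : ℝ) : Quot.mk mtRel (x, t + 2) = Quot.mk mtRel (x, t) := by
  calc Quot.mk mtRel (x, t + 2) = Quot.mk mtRel (-(-x), (t + 1) + 1) := by rw [neg_neg]; ring_nf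
    _ = Quot.mk mtRel (x, t) := by rw [mk_neg_add_one, mk_neg_add_one]

lemma mk_add_zsmul_two (x : S2) (t : ℝ) (k : ℤ) :
    Quot.mk mtRel (x, t + k • 2) = Quot.mk mtRel (x, t) := by
  induction k using Int.induction_on generalizing t with
  | zero => rw [zero_zsmul, add_zero]
  | succ k ih => rw [add_zsmul, one_zsmul, ← add_assoc, mk_add_two, ih]
  | pred k ih =>
    rw [show t + (-(k : ℤ) - 1) • (2 : ℝ) = t - 2 + -(k : ℤ) • 2 by rw [sub_zsmul]; abel, ih,
      ← mk_add_two, sub_add_cancel]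

end MT

def doubleCover (e : S2 × AddCircle (2 : ℝ)) : MT :=
  Quotient.liftOn' e.2 (fun t => Quot.mk mtRel (e.1, t)) fun t t' h => by
    obtain ⟨k, hk⟩ := AddSubgroup.mem_zmultiples_iff.mp (QuotientAddGroup.leftRel_apply.mp h)
    rw [show t' = t + k • 2 by rw [hk, add_neg_cancel_left], MT.mk_add_zsmul_two]

lemma doubleCover_coe (x : S2) (t : ℝ) :
    doubleCover (x, (t : AddCircle (2 : ℝ))) = Quot.mk mtRel (x, t) :=
  rfl

lemma doubleCover_antipodalShift (e : S2 × AddCircle (2 : ℝ)) :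
    doubleCover (antipodalShift e) = doubleCover e := by
  obtain ⟨x, s⟩ := e
  induction s using QuotientAddGroup.induction_on with
  | H t => rw [antipodalShift_coe, doubleCover_coe, doubleCover_coe, MT.mk_neg_add_one]

-- Well defined on `MT` because `σ` is an involution; it decodes equalities `p e₁ = p e₂`.
def doubleCoverFiber : MT → Set (S2 × AddCircle (2 : ℝ)) :=
  Quot.lift (fun a => {(a.1, (a.2 : AddCircle (2 : ℝ))), antipodalShift (a.1, a.2)})
    fun ⟨x, t⟩ _ ⟨hy, hu⟩ => by
      simp only at hy hu
      rw [hy, hu, ← antipodalShift_coe, involutive_antipodalShift, Set.pair_comm]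

lemma doubleCoverFiber_doubleCover (e : S2 × AddCircle (2 : ℝ)) :
    doubleCoverFiber (doubleCover e) = {e, antipodalShift e} := by
  obtain ⟨x, s⟩ := e
  induction s using QuotientAddGroup.induction_on with
  | H t => rfl

lemma doubleCover_eq_iff (e₁ e₂ : S2 × AddCircle (2 : ℝ)) :
    doubleCover e₁ = doubleCover e₂ ↔ e₁ = e₂ ∨ e₁ = antipodalShift e₂ := by
  constructor
  · intro h
    have h₁ : e₁ ∈ doubleCoverFiber (doubleCover e₁) := by
      rw [doubleCoverFiber_doubleCover]; exact .inl rfl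
    rwa [h, doubleCoverFiber_doubleCover] at h₁
  · rintro (rfl | rfl)
    exacts [rfl, doubleCover_antipodalShift e₂]

lemma isQuotientMap_doubleCover : IsQuotientMap doubleCover :=
  (IsOpenQuotientMap.id.prodMap QuotientAddGroup.isOpenQuotientMap_mk).isQuotientMap
    |>.of_comp_isQuotientMap (g := doubleCover) isQuotientMap_quot_mk

/-- The map `S² × ℝ → S²⨯S¹`, `(x,t) ↦ [x,t]`, descends to a well-defined continuous map
`p : S² × ℝ/2ℤ → S²⨯S¹` (since `[x, t+2] = [x, t]`), which is a two-sheeted covering map: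
`S² × S¹` is the orientation double cover of `S²⨯S¹`. -/
theorem orientation_double_cover_of_mappingTorus_antipodal :
    ∃ p : S2 × AddCircle (2 : ℝ) → MT,
      (∀ (x : S2) (t : ℝ), p (x, (t : AddCircle (2 : ℝ))) = Quot.mk mtRel (x, t)) ∧
      Continuous p ∧ IsCoveringMap p ∧ ∀ m : MT, Nat.card (p ⁻¹' {m}) = 2 := by
  refine ⟨doubleCover, doubleCover_coe, isQuotientMap_doubleCover.continuous,
    isQuotientMap_doubleCover.isCoveringMap_of_involutive involutive_antipodalShift
      continuous_antipodalShift antipodalShift_ne_self doubleCover_eq_iff, fun m => ?_⟩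
  obtain ⟨e, rfl⟩ := isQuotientMap_doubleCover.surjective m
  exact Nat.card_preimage_singleton_eq_two antipodalShift_ne_self doubleCover_eq_iff e
end

section
/- Let M be the mapping torus of the antipodal map of the 2-sphere and x₀ = [x, 0] for some x ∈ S². The map F : [0,1] × M → M defined by F(s, [y, t]) = [y, t + 2s] is well-defined and continuous, satisfies F(0, ·) = F(1, ·) = id_M (so F is a homotopy from the identity of M to itself), and the trace loop s ↦ F(s, x₀) = [x, 2s] is a loop at x₀ that is not null-homotopic (not path-homotopic rel endpoints to the constant loop at x₀). -/
/-!
The vertical translation `[y, t] ↦ [y, t + c]` is a continuous flow on `M` which returns to the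
identity at time `2`, so `s ↦ [·, · + 2s]` is a self-homotopy of the identity. The height
`[y, t] ↦ t mod 1` is a well-defined map `M → ℝ/ℤ`; it sends the trace loop `s ↦ [x, 2s]` to a
loop whose lift along the covering `ℝ → ℝ/ℤ` runs from `0` to `2`, whereas the constant loop
lifts to a constant path. Homotopic loops have lifts with the same endpoint, so the trace loop
is not null-homotopic.
-/

open unitInterval

theorem IsCoveringMap.not_homotopic_refl_of_lift {E X : Type*} [TopologicalSpace E]
    [TopologicalSpace X] {p : E → X} (cov : IsCoveringMap p) {x : X} (γ : Path x x)
    (Γ : C(I, E)) (hΓ : p ∘ Γ = γ) (hne : Γ 0 ≠ Γ 1) : ¬ γ.Homotopic (Path.refl x) := by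
  intro hγ
  have h₀ : γ.toContinuousMap 0 = p (Γ 0) := congrFun hΓ.symm 0
  have hlift : Γ = cov.liftPath γ (Γ 0) h₀ := (cov.eq_liftPath_iff' h₀).2 ⟨hΓ, rfl⟩
  have hrefl : cov.liftPath (Path.refl x).toContinuousMap (Γ 0) (by simpa using h₀) =
      .const I (Γ 0) :=
    cov.liftPath_const _
  have := cov.liftPath_apply_one_eq_of_homotopicRel hγ (Γ 0) h₀ (by simpa using h₀)
  rw [hrefl] at this
  exact hne ((DFunLike.congr_fun hlift 1).trans this).symm

namespace Flow

variable {α : Type*} [TopologicalSpace α] (ϕ : Flow ℝ α) {T : ℝ} (hT : ∀ x, ϕ T x = x)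

def periodicHomotopy : ContinuousMap.Homotopy (ContinuousMap.id α) (ContinuousMap.id α) where
  toFun p := ϕ (T * p.1) p.2
  continuous_toFun := ϕ.continuous (by fun_prop) continuous_snd
  map_zero_left x := by simp [ϕ.map_zero_apply]
  map_one_left x := by simp [hT]

def periodicOrbit (x : α) : Path x x where
  toFun s := ϕ (T * s) x
  continuous_toFun := ϕ.continuous (by fun_prop) continuous_const
  source' := by simp [ϕ.map_zero_apply]
  target' := by simp [hT]

end Flow

namespace MT

def verticalFlow : Flow ℝ MT where
  toFun c := Quot.map (fun a => (a.1, a.2 + c)) fun a b h => ⟨h.1, by rw [h.2]; ring⟩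
  cont' := isQuotientMap_quot_mk.continuous_lift_prod_right <|
    continuous_quot_mk.comp (by fun_prop)
  map_add' c d p := by
    induction p using Quot.ind
    simp only [Quot.map]
    congr 2
    ring
  map_zero' p := by
    induction p using Quot.ind
    simp [Quot.map]

theorem verticalFlow_two (p : MT) : verticalFlow 2 p = p := by
  induction p using Quot.ind with
  | mk a =>
    have h₁ : Quot.mk mtRel a = Quot.mk mtRel (-a.1, a.2 + 1) := Quot.sound ⟨rfl, rfl⟩
    have h₂ : Quot.mk mtRel (-a.1, a.2 + 1) = Quot.mk mtRel (a.1, a.2 + 2) :=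
      Quot.sound ⟨(neg_neg _).symm, by ring⟩
    exact (h₁.trans h₂).symm

def height : C(MT, AddCircle (1 : ℝ)) where
  toFun := Quot.lift (fun a => (a.2 : AddCircle (1 : ℝ))) fun a b h => by
    simp only [h.2, AddCircle.coe_add_period]
  continuous_toFun := continuous_quot_lift _ (by fun_prop)

end MT

/-- There is a self-homotopy `F` of the identity of the mapping torus `M` of the antipodal
map of the 2-sphere, given by `F(s, [y, t]) = [y, t + 2s]` (it is well defined and
continuous, with `F(0, ·) = F(1, ·) = id`), whose trace loop `s ↦ F(s, x₀) = [x, 2s]` at the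
base point `x₀ = [x, 0]` is not null-homotopic. -/
theorem self_homotopy_of_id_with_nontrivial_trace (x : S2) :
    ∃ F : ContinuousMap.Homotopy (ContinuousMap.id MT) (ContinuousMap.id MT),
      (∀ (s : unitInterval) (y : S2) (t : ℝ),
        F (s, Quot.mk mtRel (y, t)) = Quot.mk mtRel (y, t + 2 * (s : ℝ))) ∧
      ∃ γ : Path (Quot.mk mtRel (x, 0)) (Quot.mk mtRel (x, 0)),
        (∀ s : unitInterval, γ s = F (s, Quot.mk mtRel (x, 0))) ∧
        ¬ γ.Homotopic (Path.refl (Quot.mk mtRel (x, 0))) := by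
  refine ⟨MT.verticalFlow.periodicHomotopy MT.verticalFlow_two, fun s y t => rfl,
    MT.verticalFlow.periodicOrbit MT.verticalFlow_two _, fun s => rfl, fun hγ => ?_⟩
  let Γ : C(I, ℝ) := ⟨fun s => 2 * s, by fun_prop⟩
  refine (AddCircle.isCoveringMap_coe (1 : ℝ)).not_homotopic_refl_of_lift _ Γ ?_ (by norm_num [Γ])
    (hγ.map MT.height)
  funext s
  exact congrArg ((↑) : ℝ → AddCircle (1 : ℝ)) (zero_add _).symm
end
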